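/- Let 1 < q < 2, r > 0, R > 0 and assume f ∈ wℓ_q(R) ∩ B^r_{2,∞}(R). Then there exists C_q > 0 depending only on q such that for every p ∈ ℕ* and every β > 0, any minimizer f_{p,β} over L1(D_p) of h ↦ ‖f − h‖² + β‖h‖_{L1(D_p)} satisfies ‖f_{p,β}‖_{L1(D_p)} ≤ C_q R^q β^{1−q} and ‖f − f_{p,β}‖ ≤ R (p+1)^{−r} + √(C_q) R^{q/2} β^{1−q/2}. -/

import Mathlib

/-!
By orthonormality the Lasso objective splits over the coordinates: with `a_j = ⟪φ_j, f⟫`, the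
`j`-th coefficient `t_j` of `f_{p,β}` minimizes `(a_j - s)² + β |s|`. Hence `t_j = 0` when
`|a_j| ≤ β/2`, and otherwise `|t_j| ≤ 2 |a_j|` and `|a_j - t_j| ≤ β`. The `ℓ¹` norm of `f_{p,β}`
is therefore at most twice the sum of the `|a_j| > β/2`, and the error on the first `p`
coordinates is at most the sum of the `a_j²` with `|a_j| ≤ β/2` plus `β²` times the number of
`|a_j| > β/2`. Sorting the `a_j` into dyadic shells `η 2^m < |a_j| ≤ η 2^(m+1)`, the weak-`ℓ_q`
bound controls each shell, and the shell bounds form a geometric series, convergent because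
`1 < q` (for the large `a_j`) and `q < 2` (for the small ones). The rest of the error is the tail
`∑_{j ≥ p} a_j²` (by Parseval), which the Besov condition bounds.
-/

open MeasureTheory Real

noncomputable section

/-- Membership in the linear span of the truncated dictionary `{φ 0, …, φ (p-1)}`
(representing `{φ_1, …, φ_p}`). -/
def L1set {H : Type*} [AddCommGroup H] [Module ℝ H] (φ : ℕ → H) (p : ℕ) : Set H :=
  {h | ∃ θ : Fin p → ℝ, h = ∑ j, θ j • φ (j : ℕ)}

/-- The ℓ¹ norm with respect to the truncated dictionary. -/
def l1norm {H : Type*} [AddCommGroup H] [Module ℝ H] (φ : ℕ → H) (p : ℕ) (h : H) : ℝ :=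
  sInf {s : ℝ | ∃ θ : Fin p → ℝ, h = ∑ j, θ j • φ (j : ℕ) ∧ s = ∑ j, |θ j|}

/-- Membership in the weak `wℓ_q(R)` ball, in terms of the coefficients on the
orthonormal basis `φ`. -/
def inwlq {H : Type*} [NormedAddCommGroup H] [InnerProductSpace ℝ H]
    (φ : ℕ → H) (q R : ℝ) (g : H) : Prop :=
  ∀ η : ℝ, 0 < η → {j : ℕ | η < |(inner ℝ (φ j) g : ℝ)|}.Finite ∧
    η ^ q * ({j : ℕ | η < |(inner ℝ (φ j) g : ℝ)|}.ncard : ℝ) ≤ R ^ q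

/-- Membership in the Besov ball `B^r_{2,∞}(R)`, in terms of the coefficients on the
orthonormal basis `φ` (here `φ j` stands for `φ_{j+1}`, `j ∈ ℕ`). -/
def inBesov {H : Type*} [NormedAddCommGroup H] [InnerProductSpace ℝ H]
    (φ : ℕ → H) (r R : ℝ) (g : H) : Prop :=
  ∀ J : ℕ, ((J : ℝ) + 1) ^ (2 * r) *
      (∑' j : ℕ, if J ≤ j then (inner ℝ (φ j) g : ℝ) ^ 2 else 0) ≤ R ^ 2

open Finset
open scoped InnerProductSpace

def IsLassoMin (β a t : ℝ) : Prop :=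
  ∀ s : ℝ, (a - t) ^ 2 + β * |t| ≤ (a - s) ^ 2 + β * |s|

namespace IsLassoMin

variable {β a t : ℝ}

theorem mul_abs_le (h : IsLassoMin β a t) : β * |t| ≤ 2 * |a| * |t| - |t| ^ 2 := by
  have h₀ := h 0
  have hat : a * t ≤ |a| * |t| := by rw [← abs_mul]; exact le_abs_self _
  simp only [sub_zero, abs_zero, mul_zero, add_zero] at h₀
  rw [sq_abs]
  nlinarith

theorem lt_abs_of_ne_zero (h : IsLassoMin β a t) (ht : t ≠ 0) : β / 2 < |a| := by
  have ht' : 0 < |t| := abs_pos.mpr ht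
  nlinarith [h.mul_abs_le]

theorem abs_le (h : IsLassoMin β a t) (hβ : 0 ≤ β) : |t| ≤ 2 * |a| := by
  nlinarith [h.mul_abs_le, abs_nonneg t, abs_nonneg a]

theorem abs_sub_le (h : IsLassoMin β a t) (hβ : 0 ≤ β) : |a - t| ≤ β := by
  have hₐ := h a
  have htri : |a| - |t| ≤ |a - t| := abs_sub_abs_le_abs_sub a t
  rw [sub_self, ← sq_abs (a - t)] at hₐ
  nlinarith [abs_nonneg (a - t)]

end IsLassoMin

theorem apply_le_of_forall_sum_apply_le {ι α M : Type*} [Fintype ι] [DecidableEq ι]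
    [AddCommMonoid M] [PartialOrder M] [IsOrderedCancelAddMonoid M] (ψ : ι → α → M) {t : ι → α}
    (h : ∀ θ : ι → α, ∑ i, ψ i (t i) ≤ ∑ i, ψ i (θ i)) (i : ι) (s : α) : ψ i (t i) ≤ ψ i s := by
  have key := h (Function.update t i s)
  simp only [Function.apply_update ψ t i s] at key
  rw [sum_update_of_mem (mem_univ i), sum_eq_add_sum_sdiff_singleton_of_mem (mem_univ i)] at key
  exact le_of_add_le_add_right key

/-- Weak-`ℓ^q` bound stated on finite sets of indices, so that it passes to subfamilies. -/
def WeakLq {ι : Type*} (a : ι → ℝ) (q R : ℝ) : Prop :=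
  ∀ η : ℝ, 0 < η → ∀ F : Finset ι, (∀ j ∈ F, η < |a j|) → η ^ q * #F ≤ R ^ q

def dyadicLevel (η x : ℝ) : ℤ := Int.clog 2 (x / η) - 1

section Dyadic

variable {η x : ℝ}

theorem mem_Ioc_dyadicLevel (hη : 0 < η) (hx : 0 < x) :
    x ∈ Set.Ioc (η * 2 ^ dyadicLevel η x) (η * 2 ^ (dyadicLevel η x + 1)) := by
  have h₁ := Int.zpow_pred_clog_lt_self (R := ℝ) one_lt_two (div_pos hx hη)
  have h₂ := Int.self_le_zpow_clog (R := ℝ) one_lt_two (x / η)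
  push_cast at h₁ h₂
  rw [dyadicLevel, sub_add_cancel]
  exact ⟨(lt_div_iff₀' hη).mp h₁, (div_le_iff₀' hη).mp h₂⟩

theorem dyadicLevel_nonneg (hη : 0 < η) (h : η < x) : 0 ≤ dyadicLevel η x := by
  have hx := (mem_Ioc_dyadicLevel hη (hη.trans h)).2
  have : 1 < (2 : ℝ) ^ (dyadicLevel η x + 1) := by
    by_contra! h'
    nlinarith
  have := (one_lt_zpow_iff_right₀ one_lt_two).mp this
  omega

theorem dyadicLevel_neg (hη : 0 < η) (hx : 0 < x) (h : x ≤ η) : dyadicLevel η x < 0 := by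
  have hx' := (mem_Ioc_dyadicLevel hη hx).1
  refine (zpow_lt_one_iff_right₀ (one_lt_two (α := ℝ))).mp ?_
  by_contra! h'
  nlinarith

end Dyadic

theorem sum_zpow_le_of_nonneg {ρ : ℝ} (hρ₀ : 0 ≤ ρ) (hρ₁ : ρ < 1) {S : Finset ℤ}
    (hS : ∀ m ∈ S, 0 ≤ m) : ∑ m ∈ S, ρ ^ m ≤ (1 - ρ)⁻¹ := by
  have hinj : Set.InjOn Int.toNat S := fun m hm n hn h => by
    have := hS m hm; have := hS n hn; omega
  calc ∑ m ∈ S, ρ ^ m = ∑ n ∈ S.image Int.toNat, ρ ^ n := by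
        rw [sum_image hinj]
        refine sum_congr rfl fun m hm => ?_
        rw [← zpow_natCast, Int.toNat_of_nonneg (hS m hm)]
    _ ≤ ∑' n : ℕ, ρ ^ n :=
        Summable.sum_le_tsum _ (fun n _ => pow_nonneg hρ₀ n) (summable_geometric_of_lt_one hρ₀ hρ₁)
    _ = (1 - ρ)⁻¹ := tsum_geometric_of_lt_one hρ₀ hρ₁

namespace WeakLq

variable {ι : Type*} {a : ι → ℝ} {q R : ℝ}

theorem comp {κ : Type*} (ha : WeakLq a q R) {e : κ → ι} (he : Function.Injective e) :
    WeakLq (a ∘ e) q R := fun η hη F hF => by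
  simpa using ha η hη (F.map ⟨e, he⟩) (by simpa using hF)

theorem rpow_nonneg (ha : WeakLq a q R) : 0 ≤ R ^ q := by
  simpa using ha 1 one_pos ∅ (by simp)

theorem sum_pow_le_of_mem_Ioc (ha : WeakLq a q R) {s : ℝ} (hs : 0 < s) (n : ℕ) {G : Finset ι}
    (hG : ∀ j ∈ G, |a j| ∈ Set.Ioc s (2 * s)) :
    ∑ j ∈ G, |a j| ^ n ≤ 2 ^ n * R ^ q * s ^ ((n : ℝ) - q) := by
  have hcard := ha s hs G fun j hj => (hG j hj).1
  have hsplit : s ^ n = s ^ ((n : ℝ) - q) * s ^ q := by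
    rw [← Real.rpow_add hs, sub_add_cancel, Real.rpow_natCast]
  calc ∑ j ∈ G, |a j| ^ n ≤ ∑ _j ∈ G, (2 * s) ^ n :=
        sum_le_sum fun j hj => pow_le_pow_left₀ (abs_nonneg _) (hG j hj).2 n
    _ = 2 ^ n * s ^ ((n : ℝ) - q) * (s ^ q * #G) := by
        rw [sum_const, nsmul_eq_mul, mul_pow, hsplit]; ring
    _ ≤ 2 ^ n * s ^ ((n : ℝ) - q) * R ^ q := by gcongr
    _ = 2 ^ n * R ^ q * s ^ ((n : ℝ) - q) := by ring

theorem sum_pow_le_sum_dyadic (ha : WeakLq a q R) {η : ℝ} (hη : 0 < η) (n : ℕ) {F : Finset ι}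
    (hF : ∀ j ∈ F, a j ≠ 0) :
    ∑ j ∈ F, |a j| ^ n ≤ 2 ^ n * R ^ q *
      ∑ m ∈ F.image (fun j => dyadicLevel η |a j|), (η * 2 ^ m) ^ ((n : ℝ) - q) := by
  rw [← sum_fiberwise_of_maps_to (g := fun j => dyadicLevel η |a j|)
    fun j hj => mem_image_of_mem (fun j => dyadicLevel η |a j|) hj, mul_sum]
  refine sum_le_sum fun m _ => ha.sum_pow_le_of_mem_Ioc (by positivity) n fun j hj => ?_
  obtain ⟨hjF, rfl⟩ := mem_filter.mp hj
  have := mem_Ioc_dyadicLevel hη (abs_pos.mpr (hF j hjF))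
  rwa [zpow_add_one₀ two_ne_zero, ← mul_assoc, mul_comm _ (2 : ℝ)] at this

theorem mul_two_zpow_rpow {η : ℝ} (hη : 0 < η) (y : ℝ) (m : ℤ) :
    (η * 2 ^ m) ^ y = η ^ y * (2 ^ y) ^ m := by
  rw [Real.mul_rpow hη.le (by positivity), Real.rpow_zpow_comm zero_le_two]

theorem sum_abs_le (ha : WeakLq a q R) (hq : 1 < q) {η : ℝ} (hη : 0 < η) (F : Finset ι)
    (hF : ∀ j ∈ F, η < |a j|) :
    ∑ j ∈ F, |a j| ≤ 2 * R ^ q * η ^ (1 - q) * (1 - 2 ^ (1 - q))⁻¹ := by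
  have hρ : (2 : ℝ) ^ (1 - q) < 1 := Real.rpow_lt_one_of_one_lt_of_neg one_lt_two (by linarith)
  have hsum := ha.sum_pow_le_sum_dyadic hη 1 fun j hj => abs_pos.mp (hη.trans (hF j hj))
  simp only [pow_one, Nat.cast_one, mul_two_zpow_rpow hη, ← mul_sum] at hsum
  refine hsum.trans ?_
  have := ha.rpow_nonneg
  rw [mul_assoc (2 * R ^ q)]
  gcongr
  refine sum_zpow_le_of_nonneg (by positivity) hρ fun m hm => ?_
  obtain ⟨j, hj, rfl⟩ := mem_image.mp hm
  exact dyadicLevel_nonneg hη (hF j hj)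

theorem sum_sq_le (ha : WeakLq a q R) (hq : q < 2) {η : ℝ} (hη : 0 < η) (F : Finset ι)
    (hF : ∀ j ∈ F, |a j| ≤ η) :
    ∑ j ∈ F, a j ^ 2 ≤ 4 * R ^ q * η ^ (2 - q) * (1 - 2 ^ (q - 2))⁻¹ := by
  have hρ : (2 : ℝ) ^ (q - 2) < 1 := Real.rpow_lt_one_of_one_lt_of_neg one_lt_two (by linarith)
  have hinv : (2 : ℝ) ^ (2 - q) = (2 ^ (q - 2))⁻¹ := by
    rw [← Real.rpow_neg zero_le_two, neg_sub]
  have hsum := ha.sum_pow_le_sum_dyadic hη 2 (F := F.filter (a · ≠ 0)) fun j hj =>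
    (mem_filter.mp hj).2
  simp only [sq_abs, Nat.cast_ofNat, mul_two_zpow_rpow hη, ← mul_sum, hinv, inv_zpow'] at hsum
  rw [sum_filter_of_ne fun j _ h => by simpa using h] at hsum
  refine hsum.trans ?_
  have := ha.rpow_nonneg
  rw [show (2 : ℝ) ^ 2 = 4 by norm_num, mul_assoc (4 * R ^ q)]
  gcongr
  rw [← sum_image (g := Neg.neg) fun _ _ _ _ h => neg_injective h]
  refine sum_zpow_le_of_nonneg (by positivity) hρ fun m hm => ?_
  obtain ⟨_, hm', rfl⟩ := mem_image.mp hm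
  obtain ⟨j, hj, rfl⟩ := mem_image.mp hm'
  obtain ⟨hjF, hj0⟩ := mem_filter.mp hj
  exact (neg_pos.mpr (dyadicLevel_neg hη (abs_pos.mpr hj0) (hF j hjF))).le

section Lasso

variable [Fintype ι] {t : ι → ℝ} {β : ℝ}

theorem sum_abs_le_of_isLassoMin (ha : WeakLq a q R) (hq : 1 < q) (hβ : 0 < β)
    (ht : ∀ i, IsLassoMin β (a i) (t i)) :
    ∑ i, |t i| ≤ 4 * (1 - 2 ^ (1 - q))⁻¹ / 2 ^ (1 - q) * R ^ q * β ^ (1 - q) := by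
  have hpt : ∀ i, |t i| ≤ if β / 2 < |a i| then 2 * |a i| else 0 := fun i => by
    split_ifs with h
    · exact (ht i).abs_le hβ.le
    · rw [not_imp_comm.mp (ht i).lt_abs_of_ne_zero h, abs_zero]
  have hlarge := ha.sum_abs_le hq (half_pos hβ) (univ.filter (β / 2 < |a ·|)) fun i hi =>
    (mem_filter.mp hi).2
  calc ∑ i, |t i| ≤ ∑ i, if β / 2 < |a i| then 2 * |a i| else 0 := sum_le_sum fun i _ => hpt i
    _ = 2 * ∑ i with β / 2 < |a i|, |a i| := by rw [sum_ite, sum_const_zero, add_zero, mul_sum]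
    _ ≤ 2 * (2 * R ^ q * (β / 2) ^ (1 - q) * (1 - 2 ^ (1 - q))⁻¹) := by gcongr
    _ = _ := by rw [Real.div_rpow hβ.le zero_le_two]; ring

theorem sum_sq_sub_le_of_isLassoMin (ha : WeakLq a q R) (hq : q < 2) (hβ : 0 < β)
    (ht : ∀ i, IsLassoMin β (a i) (t i)) :
    ∑ i, (a i - t i) ^ 2 ≤ (4 * (1 - 2 ^ (q - 2))⁻¹ + 4) / 2 ^ (2 - q) * R ^ q * β ^ (2 - q) := by
  set η := β / 2 with hη_def
  have hη : 0 < η := half_pos hβ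
  have hpt : ∀ i, (a i - t i) ^ 2 ≤ if η < |a i| then β ^ 2 else a i ^ 2 := fun i => by
    split_ifs with h
    · rw [← sq_abs]
      exact pow_le_pow_left₀ (abs_nonneg _) ((ht i).abs_sub_le hβ.le) 2
    · rw [not_imp_comm.mp (ht i).lt_abs_of_ne_zero h, sub_zero]
  have hcard := ha η hη (univ.filter (η < |a ·|)) fun i hi => (mem_filter.mp hi).2
  have hsmall := ha.sum_sq_le hq hη (univ.filter (¬η < |a ·|)) fun i hi =>
    not_lt.mp (mem_filter.mp hi).2
  have hβ_sq : β ^ 2 = 4 * η ^ (2 - q) * η ^ q := by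
    rw [mul_assoc, ← Real.rpow_add hη, sub_add_cancel, Real.rpow_two, hη_def]; ring
  have := ha.rpow_nonneg
  calc ∑ i, (a i - t i) ^ 2 ≤ ∑ i, if η < |a i| then β ^ 2 else a i ^ 2 :=
        sum_le_sum fun i _ => hpt i
    _ = 4 * η ^ (2 - q) * (η ^ q * #(univ.filter (η < |a ·|))) +
          ∑ i with ¬η < |a i|, a i ^ 2 := by
        rw [sum_ite, sum_const, nsmul_eq_mul, hβ_sq]; ring
    _ ≤ 4 * η ^ (2 - q) * R ^ q + 4 * R ^ q * η ^ (2 - q) * (1 - 2 ^ (q - 2))⁻¹ := by gcongr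
    _ = _ := by rw [hη_def, Real.div_rpow hβ.le zero_le_two]; ring

end Lasso

end WeakLq

section Orthonormal

variable {ι E : Type*} [NormedAddCommGroup E] [InnerProductSpace ℝ E] {v : ι → E}

theorem Orthonormal.norm_sub_sum_smul_sq (hv : Orthonormal ℝ v) (f : E) (s : Finset ι)
    (c : ι → ℝ) :
    ‖f - ∑ i ∈ s, c i • v i‖ ^ 2 =
      ‖f‖ ^ 2 - ∑ i ∈ s, ⟪v i, f⟫_ℝ ^ 2 + ∑ i ∈ s, (⟪v i, f⟫_ℝ - c i) ^ 2 := by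
  have hcross : ⟪f, ∑ i ∈ s, c i • v i⟫_ℝ = ∑ i ∈ s, c i * ⟪v i, f⟫_ℝ := by
    simp only [inner_sum, real_inner_smul_right, real_inner_comm]
  have hnorm : ‖∑ i ∈ s, c i • v i‖ ^ 2 = ∑ i ∈ s, c i ^ 2 := by
    rw [← real_inner_self_eq_norm_sq, hv.inner_sum]
    simp [sq]
  have hexpand : ∑ i ∈ s, (⟪v i, f⟫_ℝ - c i) ^ 2 =
      ∑ i ∈ s, ⟪v i, f⟫_ℝ ^ 2 - 2 * ∑ i ∈ s, c i * ⟪v i, f⟫_ℝ + ∑ i ∈ s, c i ^ 2 := by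
    rw [mul_sum, ← sum_sub_distrib, ← sum_add_distrib]
    exact sum_congr rfl fun _ _ => by ring
  rw [norm_sub_sq_real, hcross, hnorm, hexpand]
  ring

theorem Orthonormal.hasSum_inner_sq (hv : Orthonormal ℝ v)
    (hdense : (Submodule.span ℝ (Set.range v)).topologicalClosure = ⊤) (f : E) :
    HasSum (fun i => ⟪v i, f⟫_ℝ ^ 2) (‖f‖ ^ 2) := by
  have hsq : (fun i => ‖⟪v i, f⟫_ℝ‖ ^ 2) = fun i => ⟪v i, f⟫_ℝ ^ 2 := by
    simp only [Real.norm_eq_abs, sq_abs]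
  have hsum := hsq ▸ hv.inner_products_summable f
  refine hsum.hasSum_iff.mpr (le_antisymm (hsq ▸ hv.tsum_inner_products_le f) ?_)
  -- `E` need not be complete, so there is no `HilbertBasis`: instead, the closed condition
  -- `‖f‖² - ∑' ⟪v i, f⟫² ≤ ‖f - g‖²` holds on the span, hence on its closure, which contains `f`.
  have happrox : ∀ g ∈ Submodule.span ℝ (Set.range v),
      ‖f‖ ^ 2 - ∑' i, ⟪v i, f⟫_ℝ ^ 2 ≤ ‖f - g‖ ^ 2 := by
    intro g hg
    obtain ⟨c, rfl⟩ := Finsupp.mem_span_range_iff_exists_finsupp.mp hg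
    rw [Finsupp.sum, hv.norm_sub_sum_smul_sq]
    have := hsum.sum_le_tsum c.support fun i _ => sq_nonneg _
    have := sum_nonneg fun i (_ : i ∈ c.support) => sq_nonneg (⟪v i, f⟫_ℝ - c i)
    linarith
  have hf : f ∈ closure (Submodule.span ℝ (Set.range v) : Set E) := by
    rw [← Submodule.topologicalClosure_coe, hdense]
    trivial
  have hclosed : IsClosed {g : E | ‖f‖ ^ 2 - ∑' i, ⟪v i, f⟫_ℝ ^ 2 ≤ ‖f - g‖ ^ 2} :=
    isClosed_le continuous_const (by fun_prop)
  have hself : ‖f‖ ^ 2 - ∑' i, ⟪v i, f⟫_ℝ ^ 2 ≤ ‖f - f‖ ^ 2 := closure_minimal happrox hclosed hf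
  rw [sub_self, norm_zero, zero_pow two_ne_zero, sub_nonpos] at hself
  exact hself

theorem Orthonormal.norm_sq_sub_sum_range {v : ℕ → E} (hv : Orthonormal ℝ v)
    (hdense : (Submodule.span ℝ (Set.range v)).topologicalClosure = ⊤) (f : E) (p : ℕ) :
    ‖f‖ ^ 2 - ∑ j ∈ range p, ⟪v j, f⟫_ℝ ^ 2 = ∑' j, if p ≤ j then ⟪v j, f⟫_ℝ ^ 2 else 0 := by
  have hhead : HasSum (fun j => if j < p then ⟪v j, f⟫_ℝ ^ 2 else 0)
      (∑ j ∈ range p, ⟪v j, f⟫_ℝ ^ 2) := by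
    rw [← sum_congr rfl fun j hj => if_pos (mem_range.mp hj)]
    exact hasSum_sum_of_ne_finset_zero fun j hj => if_neg (not_lt.mpr (by simpa using hj))
  have hsplit : (fun j => ⟪v j, f⟫_ℝ ^ 2 - if j < p then ⟪v j, f⟫_ℝ ^ 2 else 0) =
      fun j => if p ≤ j then ⟪v j, f⟫_ℝ ^ 2 else 0 := by
    funext j
    by_cases hj : p ≤ j
    · rw [if_pos hj, if_neg (not_lt.mpr hj), sub_zero]
    · rw [if_neg hj, if_pos (not_le.mp hj), sub_self]
  exact (hsplit ▸ (hv.hasSum_inner_sq hdense f).sub hhead).tsum_eq.symm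

end Orthonormal

section Dictionary

variable {H : Type*} [NormedAddCommGroup H] [InnerProductSpace ℝ H] {φ : ℕ → H} {p : ℕ}

theorem inwlq.weakLq {q R : ℝ} {f : H} (hw : inwlq φ q R f) :
    WeakLq (fun j => ⟪φ j, f⟫_ℝ) q R := by
  intro η hη F hF
  obtain ⟨hfin, hcount⟩ := hw η hη
  have hsub : (F : Set ℕ) ⊆ {j | η < |⟪φ j, f⟫_ℝ|} := fun j hj => hF j hj
  calc η ^ q * #F = η ^ q * (F : Set ℕ).ncard := by rw [Set.ncard_coe_finset]
    _ ≤ η ^ q * {j | η < |⟪φ j, f⟫_ℝ|}.ncard := by gcongr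
    _ ≤ R ^ q := hcount

theorem inBesov.tsum_tail_le {r R : ℝ} {f : H} (hB : inBesov φ r R f) (p : ℕ) :
    (∑' j, if p ≤ j then ⟪φ j, f⟫_ℝ ^ 2 else 0) ≤ (R * ((p : ℝ) + 1) ^ (-r)) ^ 2 := by
  have hp : (0 : ℝ) < (p : ℝ) + 1 := by positivity
  calc (∑' j, if p ≤ j then ⟪φ j, f⟫_ℝ ^ 2 else 0) ≤ R ^ 2 / ((p : ℝ) + 1) ^ (2 * r) :=
        (le_div_iff₀' (by positivity)).mpr (hB p)
    _ = (R * ((p : ℝ) + 1) ^ (-r)) ^ 2 := by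
        rw [mul_pow, ← Real.rpow_mul_natCast hp.le, Nat.cast_ofNat, neg_mul, mul_comm r,
          Real.rpow_neg hp.le, div_eq_mul_inv]

theorem l1norm_sum_smul (hφ : Orthonormal ℝ φ) (θ : Fin p → ℝ) :
    l1norm φ p (∑ j, θ j • φ (j : ℕ)) = ∑ j, |θ j| := by
  have hv : Orthonormal ℝ (fun j : Fin p => φ j) := hφ.comp _ Fin.val_injective
  have hunique : {s : ℝ | ∃ θ' : Fin p → ℝ,
      ∑ j, θ j • φ (j : ℕ) = ∑ j, θ' j • φ j ∧ s = ∑ j, |θ' j|} = {∑ j, |θ j|} := by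
    ext s
    constructor
    · rintro ⟨θ', h, rfl⟩
      have hθ : θ' = θ := funext fun i => by
        simpa [hv.inner_right_fintype] using congrArg (⟪φ i, ·⟫_ℝ) h.symm
      rw [hθ, Set.mem_singleton_iff]
    · rintro rfl
      exact ⟨θ, rfl, rfl⟩
  rw [l1norm, hunique, csInf_singleton]

theorem norm_sub_sum_fin_smul_sq (hφ : Orthonormal ℝ φ) (f : H) (θ : Fin p → ℝ) :
    ‖f - ∑ j, θ j • φ (j : ℕ)‖ ^ 2 =
      ‖f‖ ^ 2 - ∑ j : Fin p, ⟪φ j, f⟫_ℝ ^ 2 + ∑ j : Fin p, (⟪φ j, f⟫_ℝ - θ j) ^ 2 :=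
  (hφ.comp _ Fin.val_injective).norm_sub_sum_smul_sq f univ θ

theorem norm_sub_sq_add_mul_l1norm_eq (hφ : Orthonormal ℝ φ) (f : H) (β : ℝ) (θ : Fin p → ℝ) :
    ‖f - ∑ j, θ j • φ (j : ℕ)‖ ^ 2 + β * l1norm φ p (∑ j, θ j • φ (j : ℕ)) =
      (‖f‖ ^ 2 - ∑ j : Fin p, ⟪φ j, f⟫_ℝ ^ 2) +
        ∑ j : Fin p, ((⟪φ j, f⟫_ℝ - θ j) ^ 2 + β * |θ j|) := by
  rw [norm_sub_sum_fin_smul_sq hφ, l1norm_sum_smul hφ, sum_add_distrib, mul_sum]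
  ring

theorem isLassoMin_inner_of_forall_le (hφ : Orthonormal ℝ φ) {f : H} {β : ℝ} {t : Fin p → ℝ}
    (hmin : ∀ h ∈ L1set φ p,
      ‖f - ∑ j, t j • φ (j : ℕ)‖ ^ 2 + β * l1norm φ p (∑ j, t j • φ (j : ℕ)) ≤
        ‖f - h‖ ^ 2 + β * l1norm φ p h) (i : Fin p) :
    IsLassoMin β ⟪φ i, f⟫_ℝ (t i) := by
  refine apply_le_of_forall_sum_apply_le (fun (j : Fin p) s => (⟪φ j, f⟫_ℝ - s) ^ 2 + β * |s|)
    (fun θ => ?_) i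
  have := hmin _ ⟨θ, rfl⟩
  rwa [norm_sub_sq_add_mul_l1norm_eq hφ, norm_sub_sq_add_mul_l1norm_eq hφ,
    add_le_add_iff_left] at this

end Dictionary

theorem sq_sqrt_mul_rpow_half {C R β q : ℝ} (hC : 0 ≤ C) (hR : 0 ≤ R) (hβ : 0 ≤ β) :
    (√C * R ^ (q / 2) * β ^ (1 - q / 2)) ^ 2 = C * R ^ q * β ^ (2 - q) := by
  rw [mul_pow, mul_pow, Real.sq_sqrt hC, ← Real.rpow_mul_natCast hR, ← Real.rpow_mul_natCast hβ]
  ring_nf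

/-- Bounds on the deterministic Lasso `f_{p,β}` in the orthonormal case for targets
in `wℓ_q(R) ∩ B^r_{2,∞}(R)`. -/
theorem statement_15 :
    ∀ q : ℝ, 1 < q → q < 2 →
    ∃ C : ℝ, 0 < C ∧
      ∀ (r R : ℝ), 0 < r → 0 < R →
      ∀ (H : Type) [NormedAddCommGroup H] [InnerProductSpace ℝ H]
        (φ : ℕ → H), Orthonormal ℝ φ →
        (Submodule.span ℝ (Set.range φ)).topologicalClosure = ⊤ →
      ∀ f : H, inwlq φ q R f → inBesov φ r R f →
      ∀ (p : ℕ), 1 ≤ p →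
      ∀ (β : ℝ), 0 < β →
      ∀ fpβ ∈ L1set φ p,
        (∀ h ∈ L1set φ p,
          ‖f - fpβ‖ ^ 2 + β * l1norm φ p fpβ ≤ ‖f - h‖ ^ 2 + β * l1norm φ p h) →
        l1norm φ p fpβ ≤ C * R ^ q * β ^ (1 - q) ∧
        ‖f - fpβ‖ ≤ R * ((p : ℝ) + 1) ^ (-r) + Real.sqrt C * R ^ (q / 2) * β ^ (1 - q / 2) := by
  intro q hq₁ hq₂
  set C₁ : ℝ := 4 * (1 - 2 ^ (1 - q))⁻¹ / 2 ^ (1 - q)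
  set C₂ : ℝ := (4 * (1 - 2 ^ (q - 2))⁻¹ + 4) / 2 ^ (2 - q)
  have hC₁ : 0 < C₁ := by
    have := sub_pos.mpr (Real.rpow_lt_one_of_one_lt_of_neg one_lt_two (by linarith : 1 - q < 0))
    positivity
  have hC₂ : 0 < C₂ := by
    have := sub_pos.mpr (Real.rpow_lt_one_of_one_lt_of_neg one_lt_two (by linarith : q - 2 < 0))
    positivity
  refine ⟨C₁ + C₂, by positivity, ?_⟩
  rintro r R - hR H _ _ φ hφ hdense f hw hB p - β hβ _ ⟨t, rfl⟩ hmin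
  have ha : WeakLq (fun j : Fin p => ⟪φ j, f⟫_ℝ) q R := hw.weakLq.comp Fin.val_injective
  have ht := isLassoMin_inner_of_forall_le hφ hmin
  have hRq := ha.rpow_nonneg
  constructor
  · rw [l1norm_sum_smul hφ]
    exact (ha.sum_abs_le_of_isLassoMin hq₁ hβ ht).trans (by gcongr; linarith)
  · have htail : ‖f‖ ^ 2 - ∑ j : Fin p, ⟪φ j, f⟫_ℝ ^ 2 ≤ (R * ((p : ℝ) + 1) ^ (-r)) ^ 2 := by
      rw [Fin.sum_univ_eq_sum_range (fun j => ⟪φ j, f⟫_ℝ ^ 2), hφ.norm_sq_sub_sum_range hdense]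
      exact hB.tsum_tail_le p
    have herr : ∑ j : Fin p, (⟪φ j, f⟫_ℝ - t j) ^ 2 ≤ (C₁ + C₂) * R ^ q * β ^ (2 - q) :=
      (ha.sum_sq_sub_le_of_isLassoMin hq₂ hβ ht).trans (by gcongr; linarith)
    refine le_of_pow_le_pow_left₀ two_ne_zero (by positivity) ?_
    rw [norm_sub_sum_fin_smul_sq hφ, add_sq, sq_sqrt_mul_rpow_half (by positivity) hR.le hβ.le]
    have : 0 ≤ R * ((p : ℝ) + 1) ^ (-r) * (√(C₁ + C₂) * R ^ (q / 2) * β ^ (1 - q / 2)) := by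
      positivity
    linarith
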